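/- arXiv:2605.21998 — 3 statements merged into one kernel-verified Lean document; each statement's English description precedes it below -/
import Mathlib

section
/- If n ≥ 4k (with k ≥ 2 an integer), then the spectral radius of K^{k−2}_{2,n−k} equals (1/2)·√(4n − 2k − 4 + 2·√(5k² − 8kn + 4n² − 4k + 4)); equivalently, it is the largest root of x⁴ + (k − 2n + 2)x² − k² + kn + 2k − 2n = 0. -/
open SimpleGraph

/-- The `l`-edge-connectivity of a graph: the minimum number of edges whose removal
leaves a graph with at least `l` connected components, if the graph has at least `l`
vertices; otherwise the number of vertices. -/
noncomputable def edgeConnL {V : Type*} (l : ℕ) (G : SimpleGraph V) : ℕ :=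
  if l ≤ Nat.card V then
    sInf {c : ℕ | ∃ F : Set (Sym2 V), F ⊆ G.edgeSet ∧ F.ncard = c ∧
      l ≤ Nat.card (G.deleteEdges F).ConnectedComponent}
  else Nat.card V

/-- A graph is minimally `(k,l)`-edge-connected if it is connected, its
`l`-edge-connectivity is at least `k`, and deleting any edge drops the
`l`-edge-connectivity below `k`. -/
def IsMinimallyKLEdgeConnected {V : Type*} (k l : ℕ) (G : SimpleGraph V) : Prop :=
  G.Connected ∧ k ≤ edgeConnL l G ∧
    ∀ e ∈ G.edgeSet, edgeConnL l (G.deleteEdges {e}) < k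

/-- The real adjacency matrix of a simple graph. -/
noncomputable def adjMat {V : Type*} (G : SimpleGraph V) : Matrix V V ℝ :=
  letI := Classical.decRel G.Adj
  G.adjMatrix ℝ

/-- The spectral radius of a graph: the largest (real) eigenvalue of its adjacency matrix. -/
noncomputable def specRad {V : Type*} [Fintype V] [DecidableEq V]
    (G : SimpleGraph V) : ℝ :=
  sSup (spectrum ℝ (adjMat G))

abbrev KbookV (p s : ℕ) : Type := (Unit ⊕ Unit) ⊕ (Fin s ⊕ Fin p)

/-- `K^{p}_{2,s}`: the graph obtained from the disjoint union of the star `K_{1,p}` and the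
complete bipartite graph `K_{2,s}` by identifying the centre of the star with one of the two
vertices of degree `s` of `K_{2,s}`.  Here `Sum.inl (Sum.inl _)` is the identified vertex,
`Sum.inl (Sum.inr _)` is the other vertex of the part of size two, `Fin s` is the part of
size `s` and `Fin p` are the pendant vertices. -/
def Kbook (p s : ℕ) : SimpleGraph (KbookV p s) :=
  SimpleGraph.fromRel (fun a b =>
    match a, b with
    | Sum.inl (Sum.inl _), Sum.inr _ => True
    | Sum.inl (Sum.inr _), Sum.inr (Sum.inl _) => True
    | _, _ => False)


open Matrix

/-! Write `p = k - 2` and `s = n - k`. On an eigenvector for a nonzero eigenvalue `ν`, every page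
vertex (in the part of size `s`) carries `(a + b) / ν` and every pendant vertex `a / ν`, where `a`
is the value at the hub (the centre of the star) and `b` at the apex (the other vertex of degree
`s`). The eigen-equations at these two vertices
then form a `2 × 2` linear system in `(a, b)` with determinant `ν⁴ - (2s + p)ν² + sp`, so every
nonzero eigenvalue is a root of this quartic. Its largest root
`√((2s + p + √(4s² + p²)) / 2)` is an eigenvalue, with an explicit eigenvector. -/
theorem Matrix.mem_spectrum_iff_exists_mulVec_eq_smul {K n : Type*} [Field K] [Fintype n]
    [DecidableEq n] (A : Matrix n n K) (μ : K) :
    μ ∈ spectrum K A ↔ ∃ v ≠ 0, A *ᵥ v = μ • v := by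
  rw [← Matrix.spectrum_toLin', ← Module.End.hasEigenvalue_iff_mem_spectrum,
    Module.End.hasEigenvalue_iff, Submodule.ne_bot_iff]
  simp only [Module.End.mem_eigenspace_iff, Matrix.toLin'_apply]
  exact ⟨fun ⟨v, h, h0⟩ => ⟨v, h0, h⟩, fun ⟨v, h0, h⟩ => ⟨v, h, h0⟩⟩

theorem adjMat_mulVec_apply {V : Type*} [Fintype V] (G : SimpleGraph V) [DecidableRel G.Adj]
    (x : V → ℝ) (w : V) :
    (adjMat G *ᵥ x) w = ∑ v with G.Adj w v, x v := by
  simp [adjMat, Matrix.mulVec, dotProduct, Finset.sum_filter]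

namespace Kbook

variable {p s : ℕ}

section
variable (x : KbookV p s → ℝ)

theorem adjMat_mulVec_hub :
    (adjMat (Kbook p s) *ᵥ x) (.inl (.inl ())) =
      ∑ i, x (.inr (.inl i)) + ∑ j, x (.inr (.inr j)) := by
  classical
  rw [adjMat_mulVec_apply]
  simp [Kbook, Fintype.sum_sum_type, Finset.sum_filter]

theorem adjMat_mulVec_apex :
    (adjMat (Kbook p s) *ᵥ x) (.inl (.inr ())) = ∑ i, x (.inr (.inl i)) := by
  classical
  rw [adjMat_mulVec_apply]
  simp [Kbook, Fintype.sum_sum_type, Finset.sum_filter]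

theorem adjMat_mulVec_page (i : Fin s) :
    (adjMat (Kbook p s) *ᵥ x) (.inr (.inl i)) = x (.inl (.inl ())) + x (.inl (.inr ())) := by
  classical
  rw [adjMat_mulVec_apply]
  simp [Kbook, Fintype.sum_sum_type, Finset.sum_filter]

theorem adjMat_mulVec_pendant (j : Fin p) :
    (adjMat (Kbook p s) *ᵥ x) (.inr (.inr j)) = x (.inl (.inl ())) := by
  classical
  rw [adjMat_mulVec_apply]
  simp [Kbook, Fintype.sum_sum_type, Finset.sum_filter]

end

def quartic (p s : ℕ) (x : ℝ) : ℝ := x ^ 4 - (2 * s + p) * x ^ 2 + s * p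

noncomputable def radius (p s : ℕ) : ℝ := √((2 * s + p + √(4 * s ^ 2 + p ^ 2)) / 2)

variable (p s) in
theorem radius_sq : radius p s ^ 2 = (2 * s + p + √(4 * s ^ 2 + p ^ 2)) / 2 :=
  Real.sq_sqrt (by positivity)

theorem radius_pos (hs : 0 < s) : 0 < radius p s := by
  unfold radius
  positivity

variable (p s) in
theorem radius_eq_sqrt_div_two :
    radius p s = √(2 * (2 * s + p) + 2 * √(4 * s ^ 2 + p ^ 2)) / 2 := by
  rw [radius, eq_div_iff two_ne_zero, ← Real.sqrt_sq zero_le_two,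
    ← Real.sqrt_mul' _ (by positivity)]
  ring_nf

variable (p s) in
theorem quartic_radius : quartic p s (radius p s) = 0 := by
  have hroot : √(4 * (s : ℝ) ^ 2 + p ^ 2) ^ 2 = 4 * s ^ 2 + p ^ 2 := Real.sq_sqrt (by positivity)
  rw [quartic, show radius p s ^ 4 = (radius p s ^ 2) ^ 2 by ring, radius_sq]
  linear_combination hroot / 4

theorem le_radius_of_quartic_eq_zero {x : ℝ} (hx : quartic p s x = 0) : x ≤ radius p s := by
  -- the two roots of the quadratic in `x²` sum to `2s + p`, and `radius²` is the larger one
  have hr := quartic_radius p s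
  have hr_sq : (2 * s + p : ℝ) / 2 ≤ radius p s ^ 2 := by
    rw [radius_sq]; linarith [Real.sqrt_nonneg (4 * (s : ℝ) ^ 2 + p ^ 2)]
  unfold quartic at hx hr
  have hx_sq : x ^ 2 ≤ radius p s ^ 2 := by nlinarith [sq_nonneg (x ^ 2 - radius p s ^ 2)]
  exact (abs_le_of_sq_le_sq' hx_sq (Real.sqrt_nonneg _)).2

theorem radius_mem_spectrum (hs : 0 < s) : radius p s ∈ spectrum ℝ (adjMat (Kbook p s)) := by
  set ρ := radius p s
  have hq : quartic p s ρ = 0 := quartic_radius p s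
  unfold quartic at hq
  rw [Matrix.mem_spectrum_iff_exists_mulVec_eq_smul]
  refine ⟨Sum.elim (Sum.elim (fun _ => ρ * (ρ ^ 2 - s)) fun _ => s * ρ)
    (Sum.elim (fun _ => ρ ^ 2) fun _ => ρ ^ 2 - s), fun h => ?_, ?_⟩
  · have := congrFun h (.inr (.inl ⟨0, hs⟩))
    simp only [Sum.elim_inr, Sum.elim_inl, Pi.zero_apply] at this
    exact (radius_pos hs).ne' (pow_eq_zero_iff two_ne_zero |>.mp this)
  · funext w
    rcases w with ((⟨⟨⟩⟩ | ⟨⟨⟩⟩) | i | j) <;>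
      simp only [adjMat_mulVec_hub, adjMat_mulVec_apex, adjMat_mulVec_page, adjMat_mulVec_pendant,
        Sum.elim_inl, Sum.elim_inr, Finset.sum_const, Finset.card_univ, Fintype.card_fin,
        nsmul_eq_mul, Pi.smul_apply, smul_eq_mul]
    · linear_combination -hq
    · ring
    · ring

theorem quartic_eq_zero_of_mem_spectrum {ν : ℝ} (hν : ν ∈ spectrum ℝ (adjMat (Kbook p s)))
    (hν0 : ν ≠ 0) : quartic p s ν = 0 := by
  obtain ⟨v, hv, hAv⟩ := (Matrix.mem_spectrum_iff_exists_mulVec_eq_smul _ _).mp hν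
  have hub := congrFun hAv (.inl (.inl ()))
  have apex := congrFun hAv (.inl (.inr ()))
  have page (i : Fin s) := congrFun hAv (.inr (.inl i))
  have pendant (j : Fin p) := congrFun hAv (.inr (.inr j))
  simp only [adjMat_mulVec_hub, adjMat_mulVec_apex, adjMat_mulVec_page, adjMat_mulVec_pendant,
    Pi.smul_apply, smul_eq_mul] at hub apex page pendant
  set a := v (.inl (.inl ()))
  set b := v (.inl (.inr ()))
  have sum_page : ν * ∑ i, v (.inr (.inl i)) = s * (a + b) := by
    simp only [Finset.mul_sum, ← page, Finset.sum_const, Finset.card_univ, Fintype.card_fin,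
      nsmul_eq_mul]
  have sum_pendant : ν * ∑ j, v (.inr (.inr j)) = p * a := by
    simp only [Finset.mul_sum, ← pendant, Finset.sum_const, Finset.card_univ, Fintype.card_fin,
      nsmul_eq_mul]
  have eq_a : ν ^ 2 * a = (s + p) * a + s * b := by
    linear_combination sum_page + sum_pendant - ν * hub
  have eq_b : ν ^ 2 * b = s * a + s * b := by
    linear_combination sum_page - ν * apex
  have ha : quartic p s ν * a = 0 := by
    unfold quartic
    linear_combination (ν ^ 2 - s) * eq_a + s * eq_b
  have hb : quartic p s ν * b = 0 := by
    unfold quartic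
    linear_combination s * eq_a + (ν ^ 2 - s - p) * eq_b
  by_contra hq
  replace ha := (mul_eq_zero.mp ha).resolve_left hq
  replace hb := (mul_eq_zero.mp hb).resolve_left hq
  refine hv (funext fun w => ?_)
  rcases w with ((⟨⟨⟩⟩ | ⟨⟨⟩⟩) | i | j)
  · exact ha
  · exact hb
  · simpa [ha, hb, hν0] using page i
  · simpa [ha, hν0] using pendant j

theorem isGreatest_spectrum (hs : 0 < s) :
    IsGreatest (spectrum ℝ (adjMat (Kbook p s))) (radius p s) := by
  refine ⟨radius_mem_spectrum hs, fun ν hν => ?_⟩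
  rcases eq_or_ne ν 0 with rfl | hν0
  · exact (radius_pos hs).le
  · exact le_radius_of_quartic_eq_zero (quartic_eq_zero_of_mem_spectrum hν hν0)

variable (p s) in
theorem isGreatest_quartic_roots : IsGreatest {x | quartic p s x = 0} (radius p s) :=
  ⟨quartic_radius p s, fun _ => le_radius_of_quartic_eq_zero⟩

theorem specRad_eq_radius (hs : 0 < s) : specRad (Kbook p s) = radius p s :=
  (isGreatest_spectrum hs).csSup_eq

end Kbook

/-- If `n ≥ 4k` (with `k ≥ 2`), then the spectral radius of `K^{k−2}_{2,n−k}` equals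
`√(4n − 2k − 4 + 2√(5k² − 8kn + 4n² − 4k + 4)) / 2`; equivalently, it is the largest root
of `x⁴ + (k − 2n + 2)x² − k² + kn + 2k − 2n = 0`. -/
theorem spectral_radius_Kbook_order (k n : ℕ) (hk : 2 ≤ k) (hn : 4 * k ≤ n) :
    specRad (Kbook (k - 2) (n - k)) =
      Real.sqrt (4 * (n : ℝ) - 2 * (k : ℝ) - 4 +
        2 * Real.sqrt (5 * (k : ℝ) ^ 2 - 8 * (k : ℝ) * (n : ℝ) + 4 * (n : ℝ) ^ 2
          - 4 * (k : ℝ) + 4)) / 2 ∧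
    IsGreatest {x : ℝ | x ^ 4 + ((k : ℝ) - 2 * (n : ℝ) + 2) * x ^ 2 - (k : ℝ) ^ 2
        + (k : ℝ) * (n : ℝ) + 2 * (k : ℝ) - 2 * (n : ℝ) = 0}
      (specRad (Kbook (k - 2) (n - k))) := by
  have hp : ((k - 2 : ℕ) : ℝ) = k - 2 := by rw [Nat.cast_sub hk, Nat.cast_two]
  have hs : ((n - k : ℕ) : ℝ) = n - k := Nat.cast_sub (by omega)
  have hquartic : {x : ℝ | x ^ 4 + ((k : ℝ) - 2 * (n : ℝ) + 2) * x ^ 2 - (k : ℝ) ^ 2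
      + (k : ℝ) * (n : ℝ) + 2 * (k : ℝ) - 2 * (n : ℝ) = 0} =
      {x | Kbook.quartic (k - 2) (n - k) x = 0} := by
    ext x
    simp only [Set.mem_ofPred_eq, Kbook.quartic, hp, hs]
    ring_nf
  rw [Kbook.specRad_eq_radius (by omega), hquartic]
  refine ⟨?_, Kbook.isGreatest_quartic_roots _ _⟩
  rw [Kbook.radius_eq_sqrt_div_two, hp, hs]
  ring_nf
end

section
/- No minimally (2,2)-edge-connected graph contains the complete bipartite graph K_{3,3} as a subgraph. -/
open SimpleGraph

section Aux
variable {V : Type*}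

lemma aux_two_le_card_components [Finite V] {G : SimpleGraph V}
    (h : ¬ G.Preconnected) : 2 ≤ Nat.card G.ConnectedComponent := by
  rw [Preconnected] at h
  push_neg at h
  obtain ⟨x, y, hxy⟩ := h
  haveI : Finite G.ConnectedComponent := Quot.finite _
  have hne : G.connectedComponentMk x ≠ G.connectedComponentMk y := by
    intro hc
    exact hxy (SimpleGraph.ConnectedComponent.exact hc)
  have : Nontrivial G.ConnectedComponent := ⟨_, _, hne⟩
  exact Finite.one_lt_card_iff_nontrivial.mpr this

lemma aux_card_components_le_one [Finite V] {G : SimpleGraph V}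
    (h : G.Preconnected) : Nat.card G.ConnectedComponent ≤ 1 := by
  haveI : Finite G.ConnectedComponent := Quot.finite _
  have : Subsingleton G.ConnectedComponent := by
    constructor
    intro a b
    induction a using SimpleGraph.ConnectedComponent.ind with
    | _ v =>
    induction b using SimpleGraph.ConnectedComponent.ind with
    | _ w => exact SimpleGraph.ConnectedComponent.sound (h v w)
  exact Finite.card_le_one_iff_subsingleton.mpr this

lemma aux_reachable_delete {G : SimpleGraph V} {e : Sym2 V} {a b : V}
    (he : e = s(a, b)) (hab : (G.deleteEdges {e}).Reachable a b)
    {x y : V} (h : G.Reachable x y) : (G.deleteEdges {e}).Reachable x y := by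
  have key : ∀ {u v : V}, G.Adj u v → (G.deleteEdges {e}).Reachable u v := by
    intro u v hadj
    by_cases hc : s(u, v) = e
    · rw [he, Sym2.eq_iff] at hc
      rcases hc with ⟨rfl, rfl⟩ | ⟨rfl, rfl⟩
      · exact hab
      · exact hab.symm
    · exact SimpleGraph.Adj.reachable (by simp [deleteEdges_adj, hadj, hc])
  obtain ⟨w⟩ := h
  induction w with
  | nil => exact Reachable.refl _
  | cons hadj p ih => exact Reachable.trans (key hadj) ih
end Aux

/-- No minimally `(2,2)`-edge-connected graph contains the complete bipartite graph
`K_{3,3}` as a subgraph. -/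
theorem minimally_22_edge_connected_no_K33
    {V : Type*} [Fintype V] (G : SimpleGraph V)
    (hG : IsMinimallyKLEdgeConnected 2 2 G) :
    ¬ ∃ f : completeBipartiteGraph (Fin 3) (Fin 3) →g G, Function.Injective f := by
  rintro ⟨f, hf⟩
  obtain ⟨hconn, hκ, hmin⟩ := hG
  set a : Fin 3 → V := fun i => f (Sum.inl i) with ha
  set b : Fin 3 → V := fun i => f (Sum.inr i) with hb
  have hab : ∀ i j, G.Adj (a i) (b j) := fun i j => f.map_rel (by simp)
  have habne : ∀ i j, a i ≠ b j := by
    intro i j h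
    exact absurd (hf h) (by simp)
  have hedge : ∀ i j i' j' : Fin 3, s(a i, b j) = s(a i', b j') → i = i' ∧ j = j' := by
    intro i j i' j' h
    rw [Sym2.eq_iff] at h
    rcases h with ⟨h1, h2⟩ | ⟨h1, h2⟩
    · exact ⟨Sum.inl_injective (hf h1), Sum.inr_injective (hf h2)⟩
    · exact absurd h1 (habne i j')
  have hcardV : 2 ≤ Nat.card V := by
    have h6 : Nat.card (Fin 3 ⊕ Fin 3) ≤ Nat.card V := Nat.card_le_card_of_injective f hf
    simp [Nat.card_eq_fintype_card] at h6 ⊢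
    omega
  set e : Sym2 V := s(a 0, b 0) with heq
  have heE : e ∈ G.edgeSet := hab 0 0
  have hlt := hmin e heE
  rw [edgeConnL, if_pos hcardV] at hlt hκ
  set S : Set ℕ := {c : ℕ | ∃ F : Set (Sym2 V), F ⊆ (G.deleteEdges {e}).edgeSet ∧ F.ncard = c ∧
      2 ≤ Nat.card ((G.deleteEdges {e}).deleteEdges F).ConnectedComponent} with hS
  -- S is nonempty
  have hSne : S.Nonempty := by
    refine ⟨_, (G.deleteEdges {e}).edgeSet, le_rfl, rfl, ?_⟩
    have hbot : (G.deleteEdges {e}).deleteEdges (G.deleteEdges {e}).edgeSet = ⊥ := by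
      rw [deleteEdges_edgeSet, sdiff_self]
    rw [hbot]
    apply aux_two_le_card_components
    intro h
    exact habne 0 0 (reachable_bot.mp (h (a 0) (b 0)))
  obtain ⟨F, hFsub, hFcard, hFcomp⟩ := Nat.sInf_mem hSne
  have hF1 : F.ncard ≤ 1 := by omega
  -- deleting F from G keeps it preconnected
  have hFsubG : F ⊆ G.edgeSet := hFsub.trans (edgeSet_mono (deleteEdges_le _))
  have hpre : (G.deleteEdges F).Preconnected := by
    by_contra h
    have hmem : F.ncard ∈ {c : ℕ | ∃ F' : Set (Sym2 V), F' ⊆ G.edgeSet ∧ F'.ncard = c ∧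
        2 ≤ Nat.card (G.deleteEdges F').ConnectedComponent} :=
      ⟨F, hFsubG, rfl, aux_two_le_card_components h⟩
    have := Nat.sInf_le hmem
    omega
  -- the two candidate detour paths
  have hnotE : ∀ i j : Fin 3, (i, j) ≠ (0, 0) → s(a i, b j) ∉ ({e} : Set (Sym2 V)) := by
    intro i j hij h
    simp only [Set.mem_singleton_iff, heq] at h
    obtain ⟨h1, h2⟩ := hedge _ _ _ _ h
    exact hij (by simp [h1, h2])
  have havoid : (s(a 0, b 1) ∉ F ∧ s(a 1, b 1) ∉ F ∧ s(a 1, b 0) ∉ F) ∨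
      (s(a 0, b 2) ∉ F ∧ s(a 2, b 2) ∉ F ∧ s(a 2, b 0) ∉ F) := by
    by_contra h
    push_neg at h
    obtain ⟨h1', h2'⟩ := h
    have h1 : s(a 0, b 1) ∈ F ∨ s(a 1, b 1) ∈ F ∨ s(a 1, b 0) ∈ F := by tauto
    have h2 : s(a 0, b 2) ∈ F ∨ s(a 2, b 2) ∈ F ∨ s(a 2, b 0) ∈ F := by tauto
    have key : ∀ x ∈ F, ∀ y ∈ F, x ≠ y → False := by
      intro x hx y hy hxy
      have : 1 < F.ncard := (Set.one_lt_ncard (Set.toFinite F)).mpr ⟨x, hx, y, hy, hxy⟩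
      omega
    rcases h1 with h1 | h1 | h1 <;> rcases h2 with h2 | h2 | h2 <;>
      exact key _ h1 _ h2 (fun hc => by
        obtain ⟨hi, hj⟩ := hedge _ _ _ _ hc
        simp at hi hj)
  -- reachability of a 0 and b 0 after deleting F and e
  have hHadj : ∀ i j : Fin 3, (i, j) ≠ (0, 0) → s(a i, b j) ∉ F →
      ((G.deleteEdges F).deleteEdges {e}).Adj (a i) (b j) := by
    intro i j hij hF
    simp only [deleteEdges_adj]
    exact ⟨⟨hab i j, hF⟩, hnotE i j hij⟩
  have hreach : ((G.deleteEdges F).deleteEdges {e}).Reachable (a 0) (b 0) := by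
    rcases havoid with ⟨h1, h2, h3⟩ | ⟨h1, h2, h3⟩
    · exact (Adj.reachable (hHadj 0 1 (by simp) h1)).trans
        (((Adj.reachable (hHadj 1 1 (by simp) h2)).symm).trans
          (Adj.reachable (hHadj 1 0 (by simp) h3)))
    · exact (Adj.reachable (hHadj 0 2 (by simp) h1)).trans
        (((Adj.reachable (hHadj 2 2 (by simp) h2)).symm).trans
          (Adj.reachable (hHadj 2 0 (by simp) h3)))
  -- conclude preconnectedness after deleting {e} ∪ F
  have hcomm : (G.deleteEdges {e}).deleteEdges F = (G.deleteEdges F).deleteEdges {e} := by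
    rw [deleteEdges_deleteEdges, deleteEdges_deleteEdges, Set.union_comm]
  have hpre2 : ((G.deleteEdges {e}).deleteEdges F).Preconnected := by
    rw [hcomm]
    intro x y
    exact aux_reachable_delete heq hreach (hpre x y)
  have := aux_card_components_le_one hpre2
  omega
end

section
/- Let k ≥ 2 be an integer and n ≥ 4k. Then the graph K^{k−2}_{2,n−k} is minimally (k,k)-edge-connected. -/
open SimpleGraph

/-! Write `c` for the vertex of `K^{p}_{2,s}` carrying the `p` pendant leaves, `a` for the other
vertex of degree `s` of `K_{2,s}`, `m_j` for the middle vertices, and `k = p + 2`.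

Lower bound: let `F` be a set of edges whose deletion leaves `k` components. If some path
`c m_j a` avoids `F`, then `c` and `a` stay together and every other component is a single leaf
whose edge lies in `F`, or a single `m_j` both of whose edges lie in `F`. Of these `k - 1` or more
components at most `p = k - 2` are leaves, so one is an `m_j` and costs two edges: `|F| ≥ k`.
Otherwise `F` meets each of the `s ≥ k` edge-disjoint paths `c m_j a`.

Minimality: every edge lies among the `p + 2` edges at the leaves and at some `m_j`. Deleting
all of them isolates the `p` leaves and `m_j`, leaving `k` components, so once one of these edges
is gone, the other `k - 1` suffice. -/

namespace SimpleGraph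

variable {V : Type*} {G : SimpleGraph V}

lemma IsIsolated.eq_of_reachable {v w : V} (hv : G.IsIsolated v) (h : G.Reachable v w) :
    v = w := by
  obtain ⟨_ | ⟨hadj, _⟩⟩ := h
  · rfl
  · exact (hv _ hadj).elim

lemma isIsolated_deleteEdges_of_incidenceSet_subset {v : V} {F : Set (Sym2 V)}
    (h : G.incidenceSet v ⊆ F) : (G.deleteEdges F).IsIsolated v := fun _ hadj =>
  (deleteEdges_adj.1 hadj).2 (h ⟨(deleteEdges_adj.1 hadj).1, Sym2.mem_mk_left _ _⟩)

lemma card_connectedComponent_le_card_of_forall_reachable (R : Finset V)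
    (hR : ∀ x, ∃ r ∈ R, G.Reachable r x) : Nat.card G.ConnectedComponent ≤ R.card := by
  rw [← Nat.card_eq_finsetCard]
  refine Nat.card_le_card_of_surjective (fun r : R => G.connectedComponentMk r) fun c => ?_
  induction c using ConnectedComponent.ind with | h x =>
  obtain ⟨r, hr, hrx⟩ := hR x
  exact ⟨⟨r, hr⟩, ConnectedComponent.sound hrx⟩

lemma ncard_le_card_connectedComponent [Finite V] {S : Set V}
    (hS : S.Pairwise fun x y => ¬ G.Reachable x y) : S.ncard ≤ Nat.card G.ConnectedComponent := by
  rw [← Nat.card_coe_set_eq]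
  refine Nat.card_le_card_of_injective (fun x : S => G.connectedComponentMk x) fun x y hxy => ?_
  by_contra hne
  exact hS x.2 y.2 (Subtype.coe_ne_coe.2 hne) (ConnectedComponent.exact hxy)

end SimpleGraph

section edgeConnL

variable {V : Type*} {G : SimpleGraph V} {k l : ℕ}

lemma le_edgeConnL [Finite V] (hl : l ≤ Nat.card V)
    (h : ∀ F ⊆ G.edgeSet, l ≤ Nat.card (G.deleteEdges F).ConnectedComponent → k ≤ F.ncard) :
    k ≤ edgeConnL l G := by
  rw [edgeConnL, if_pos hl]
  have hbot : l ≤ Nat.card (G.deleteEdges G.edgeSet).ConnectedComponent := by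
    rw [deleteEdges_edgeSet, sdiff_self]
    refine hl.trans ((Set.ncard_univ V).ge.trans ?_)
    exact ncard_le_card_connectedComponent fun x _ y _ hxy h => hxy (reachable_bot.1 h)
  exact le_csInf ⟨_, G.edgeSet, subset_rfl, rfl, hbot⟩ fun c ⟨F, hF, hc, hcomp⟩ => hc ▸ h F hF hcomp

lemma edgeConnL_le (hl : l ≤ Nat.card V) {F : Set (Sym2 V)} (hF : F ⊆ G.edgeSet)
    (hcomp : l ≤ Nat.card (G.deleteEdges F).ConnectedComponent) : edgeConnL l G ≤ F.ncard := by
  rw [edgeConnL, if_pos hl]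
  exact Nat.sInf_le ⟨F, hF, rfl, hcomp⟩

end edgeConnL

namespace Kbook

variable {p s : ℕ}

def center : KbookV p s := .inl (.inl ())
def apex : KbookV p s := .inl (.inr ())
def mid (j : Fin s) : KbookV p s := .inr (.inl j)
def leaf (i : Fin p) : KbookV p s := .inr (.inr i)

lemma leaf_injective : Function.Injective (leaf : Fin p → KbookV p s) :=
  Sum.inr_injective.comp Sum.inr_injective

def edge : Fin p ⊕ Fin s ⊕ Fin s → Sym2 (KbookV p s)
  | .inl i => s(center, leaf i)
  | .inr (.inl j) => s(center, mid j)
  | .inr (.inr j) => s(apex, mid j)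

lemma edge_injective : Function.Injective (edge (p := p) (s := s)) := by
  rintro (i | j | j) (i' | j' | j') h <;> simp_all [edge, center, apex, mid, leaf]

lemma edgeSet_eq : (Kbook p s).edgeSet = Set.range edge := by
  ext e
  induction e using Sym2.ind with | _ a b =>
  constructor
  · intro h
    rcases a with (⟨⟩ | ⟨⟩) | (j | i) <;> rcases b with (⟨⟩ | ⟨⟩) | (j' | i') <;>
      simp_all [Kbook, edge, center, apex, mid, leaf]
  · rintro ⟨x | x | x, h⟩ <;> rw [← h] <;> simp [Kbook, edge, center, apex, mid, leaf]

lemma edge_mem_edgeSet (x : Fin p ⊕ Fin s ⊕ Fin s) : edge x ∈ (Kbook p s).edgeSet :=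
  edgeSet_eq ▸ Set.mem_range_self x

lemma adj_center_leaf (i : Fin p) : (Kbook p s).Adj center (leaf i) :=
  edge_mem_edgeSet (.inl i)

lemma adj_center_mid (j : Fin s) : (Kbook p s).Adj center (mid j) :=
  edge_mem_edgeSet (.inr (.inl j))

lemma adj_apex_mid (j : Fin s) : (Kbook p s).Adj apex (mid j) :=
  edge_mem_edgeSet (.inr (.inr j))

lemma connected (hs : 0 < s) : (Kbook p s).Connected := by
  have hreach : ∀ x, (Kbook p s).Reachable center x := by
    rintro ((⟨⟩ | ⟨⟩) | (j | i))
    · rfl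
    · exact (adj_center_mid ⟨0, hs⟩).reachable.trans (adj_apex_mid ⟨0, hs⟩).reachable.symm
    · exact (adj_center_mid j).reachable
    · exact (adj_center_leaf i).reachable
  exact (connected_iff_exists_forall_reachable _).2 ⟨center, hreach⟩

lemma add_two_le_card : p + 2 ≤ Nat.card (KbookV p s) := by
  simp only [Nat.card_eq_fintype_card, Fintype.card_sum, Fintype.card_unit, Fintype.card_fin]
  omega

variable {F : Set (Sym2 (KbookV p s))}

lemma reachable_center_or_cut_off (j0 : Fin s) (h1 : edge (.inr (.inl j0)) ∉ F)
    (h2 : edge (.inr (.inr j0)) ∉ F) (x : KbookV p s) :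
    ((Kbook p s).deleteEdges F).Reachable center x ∨ (∃ i, edge (.inl i) ∈ F ∧ x = leaf i) ∨
      ∃ j, edge (.inr (.inl j)) ∈ F ∧ edge (.inr (.inr j)) ∈ F ∧ x = mid j := by
  have adj : ∀ {a b}, (Kbook p s).Adj a b → s(a, b) ∉ F →
      ((Kbook p s).deleteEdges F).Reachable a b :=
    fun h h' => (deleteEdges_adj.2 ⟨h, h'⟩).reachable
  have hapex : ((Kbook p s).deleteEdges F).Reachable center apex :=
    (adj (adj_center_mid j0) h1).trans (adj (adj_apex_mid j0) h2).symm
  rcases x with (⟨⟩ | ⟨⟩) | (j | i)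
  · exact .inl .rfl
  · exact .inl hapex
  · by_cases hc : edge (.inr (.inl j)) ∈ F
    · by_cases ha : edge (.inr (.inr j)) ∈ F
      · exact .inr (.inr ⟨j, hc, ha, rfl⟩)
      · exact .inl (hapex.trans (adj (adj_apex_mid j) ha))
    · exact .inl (adj (adj_center_mid j) hc)
  · by_cases hl : edge (.inl i) ∈ F
    · exact .inr (.inl ⟨i, hl, rfl⟩)
    · exact .inl (adj (adj_center_leaf i) hl)

open Finset in
lemma le_ncard_of_mid_notMem (j0 : Fin s) (h1 : edge (.inr (.inl j0)) ∉ F)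
    (h2 : edge (.inr (.inr j0)) ∉ F)
    (hF : p + 2 ≤ Nat.card ((Kbook p s).deleteEdges F).ConnectedComponent) :
    p + 2 ≤ F.ncard := by
  classical
  set A := univ.filter fun i => edge (.inl i) ∈ F
  set T := univ.filter fun j => edge (.inr (.inl j)) ∈ F ∧ edge (.inr (.inr j)) ∈ F
  have hcomp : Nat.card ((Kbook p s).deleteEdges F).ConnectedComponent ≤ 1 + #A + #T := by
    calc _ ≤ #(insert center (A.image leaf ∪ T.image mid)) := by
          refine card_connectedComponent_le_card_of_forall_reachable _ fun x => ?_
          rcases reachable_center_or_cut_off j0 h1 h2 x with h | ⟨i, hi, rfl⟩ | ⟨j, hc, ha, rfl⟩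
          · exact ⟨center, mem_insert_self _ _, h⟩
          · refine ⟨leaf i, mem_insert_of_mem (mem_union_left _ ?_), .rfl⟩
            exact mem_image_of_mem _ (mem_filter.2 ⟨mem_univ _, hi⟩)
          · refine ⟨mid j, mem_insert_of_mem (mem_union_right _ ?_), .rfl⟩
            exact mem_image_of_mem _ (mem_filter.2 ⟨mem_univ _, hc, ha⟩)
      _ ≤ #(A.image leaf ∪ T.image mid) + 1 := card_insert_le _ _
      _ ≤ 1 + #A + #T := by
          have := (card_union_le _ _).trans (add_le_add (card_image_le (s := A) (f := leaf))
            (card_image_le (s := T) (f := mid)))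
          omega
  have hedges : #A + 2 * #T ≤ F.ncard := by
    calc #A + 2 * #T = #(A.disjSum (T.disjSum T)) := by simp only [card_disjSum]; ring
      _ ≤ (edge ⁻¹' F).ncard := by
          rw [← Set.ncard_coe_finset]
          refine Set.ncard_le_ncard ?_
          rintro (i | j | j) <;> simp +contextual [A, T]
      _ ≤ F.ncard := Set.ncard_le_ncard_of_injOn edge (fun _ h => h) edge_injective.injOn
  have hA : #A ≤ p := (card_le_univ A).trans (by simp)
  omega

lemma le_ncard_of_forall_mid_mem (h : ∀ j, edge (.inr (.inl j)) ∈ F ∨ edge (.inr (.inr j)) ∈ F) :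
    s ≤ F.ncard := by
  classical
  let g : Fin s → Fin p ⊕ Fin s ⊕ Fin s := fun j =>
    if edge (.inr (.inl j)) ∈ F then .inr (.inl j) else .inr (.inr j)
  have hg : Function.Injective g := by
    intro a b hab
    simp only [g] at hab
    split_ifs at hab <;> simp_all
  calc s = (Set.univ : Set (Fin s)).ncard := by simp
    _ ≤ F.ncard := by
      refine Set.ncard_le_ncard_of_injOn (edge ∘ g) (fun j _ => ?_) (edge_injective.comp hg).injOn
      simp only [Function.comp, g]
      split_ifs with hc
      · exact hc
      · exact (h j).resolve_left hc

lemma le_ncard_of_le_card_connectedComponent (hs : p + 2 ≤ s)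
    (hF : p + 2 ≤ Nat.card ((Kbook p s).deleteEdges F).ConnectedComponent) :
    p + 2 ≤ F.ncard := by
  by_cases h : ∀ j, edge (.inr (.inl j)) ∈ F ∨ edge (.inr (.inr j)) ∈ F
  · exact hs.trans (le_ncard_of_forall_mid_mem h)
  · push Not at h
    obtain ⟨j0, h1, h2⟩ := h
    exact le_ncard_of_mid_notMem j0 h1 h2 hF

lemma le_edgeConnL (hs : p + 2 ≤ s) : p + 2 ≤ edgeConnL (p + 2) (Kbook p s) :=
  _root_.le_edgeConnL add_two_le_card fun _ _ hF => le_ncard_of_le_card_connectedComponent hs hF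

def cutSet (j0 : Fin s) : Set (Sym2 (KbookV p s)) :=
  edge '' (Set.range Sum.inl ∪ {.inr (.inl j0), .inr (.inr j0)})

lemma ncard_cutSet_le (j0 : Fin s) : (cutSet (p := p) j0).ncard ≤ p + 2 := by
  refine (Set.ncard_image_le (Set.toFinite _)).trans ((Set.ncard_union_le _ _).trans ?_)
  rw [Set.ncard_range_of_injective Sum.inl_injective, Nat.card_fin]
  have := Set.ncard_insert_le (Sum.inr (Sum.inl j0) : Fin p ⊕ Fin s ⊕ Fin s) {.inr (.inr j0)}
  rw [Set.ncard_singleton] at this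
  omega

lemma cutSet_subset_edgeSet (j0 : Fin s) : cutSet j0 ⊆ (Kbook p s).edgeSet :=
  edgeSet_eq ▸ Set.image_subset_range _ _

lemma exists_mem_cutSet (hs : 0 < s) {e : Sym2 (KbookV p s)} (he : e ∈ (Kbook p s).edgeSet) :
    ∃ j0, e ∈ cutSet j0 := by
  rw [edgeSet_eq] at he
  obtain ⟨x | j | j, rfl⟩ := he
  · exact ⟨⟨0, hs⟩, Set.mem_image_of_mem _ (.inl ⟨x, rfl⟩)⟩
  · exact ⟨j, Set.mem_image_of_mem _ (.inr (by simp))⟩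
  · exact ⟨j, Set.mem_image_of_mem _ (.inr (by simp))⟩

lemma incidenceSet_subset_cutSet {j0 : Fin s} {v : KbookV p s}
    (hv : v ∈ insert (mid j0) (Set.range leaf)) : (Kbook p s).incidenceSet v ⊆ cutSet j0 := by
  rintro e ⟨he, hve⟩
  rw [edgeSet_eq] at he
  rcases hv with rfl | ⟨i, rfl⟩ <;> obtain ⟨x | j | j, rfl⟩ := he <;>
    refine Set.mem_image_of_mem _ ?_ <;> simp_all [edge, center, apex, mid, leaf]

lemma le_card_connectedComponent_deleteEdges_cutSet (j0 : Fin s) :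
    p + 2 ≤ Nat.card ((Kbook p s).deleteEdges (cutSet j0)).ConnectedComponent := by
  set I : Set (KbookV p s) := insert (mid j0) (Set.range leaf)
  have hI : ∀ v ∈ I, ((Kbook p s).deleteEdges (cutSet j0)).IsIsolated v := fun _ hv =>
    isIsolated_deleteEdges_of_incidenceSet_subset (incidenceSet_subset_cutSet hv)
  calc p + 2 = (insert center I).ncard := by
        rw [Set.ncard_insert_of_notMem (by simp [I, center, mid, leaf]),
          Set.ncard_insert_of_notMem (by simp [mid, leaf]),
          Set.ncard_range_of_injective leaf_injective, Nat.card_fin]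
    _ ≤ _ := by
        refine ncard_le_card_connectedComponent fun x hx y hy hxy hr => ?_
        rcases hx with rfl | hx
        · exact hxy ((hI y (hy.resolve_left (Ne.symm hxy))).eq_of_reachable hr.symm).symm
        · exact hxy ((hI x hx).eq_of_reachable hr)

lemma edgeConnL_deleteEdges_lt (hs : 0 < s) {e : Sym2 (KbookV p s)}
    (he : e ∈ (Kbook p s).edgeSet) : edgeConnL (p + 2) ((Kbook p s).deleteEdges {e}) < p + 2 := by
  obtain ⟨j0, hj0⟩ := exists_mem_cutSet hs he
  calc _ ≤ (cutSet j0 \ {e}).ncard := by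
        refine edgeConnL_le add_two_le_card ?_ ?_
        · rw [edgeSet_deleteEdges]
          exact Set.sdiff_subset_sdiff_left (cutSet_subset_edgeSet j0)
        · rw [deleteEdges_deleteEdges, Set.union_sdiff_cancel (Set.singleton_subset_iff.2 hj0)]
          exact le_card_connectedComponent_deleteEdges_cutSet j0
    _ < p + 2 := by
        have := ncard_cutSet_le (p := p) j0
        rw [Set.ncard_sdiff_singleton_of_mem hj0]
        omega

end Kbook

/-- Let `k ≥ 2` and `n ≥ 4k`.  Then the graph `K^{k−2}_{2,n−k}` is minimally
`(k,k)`-edge-connected. -/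
theorem Kbook_isMinimallyKKEdgeConnected (k n : ℕ) (hk : 2 ≤ k) (hn : 4 * k ≤ n) :
    IsMinimallyKLEdgeConnected k k (Kbook (k - 2) (n - k)) := by
  obtain ⟨p, rfl⟩ : ∃ p, k = p + 2 := ⟨k - 2, by omega⟩
  rw [Nat.add_sub_cancel]
  exact ⟨Kbook.connected (by omega), Kbook.le_edgeConnL (by omega),
    fun _ he => Kbook.edgeConnL_deleteEdges_lt (by omega) he⟩
end
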